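/- (Theorem 3, upper bound and weak ergodicity for the SZK model.) In the SZK setting, assume λ_{k+1}(t) ≤ λ_k(t) and μ_{k+1}(t) ≤ μ_k(t) for all 1 ≤ k ≤ S−1 and all t ≥ 0. Set α_k(t) = −∑_{i=1}^S (D B(t) D⁻¹)_{ik} for 1 ≤ k ≤ S and β^*(t) = min_{1≤k≤S} α_k(t). Then for any two differentiable functions z*, z** : [0,∞) → ℝ^S satisfying z'(t) = B(t)z(t) + f(t) for all t ≥ 0, where f(t)_i = λ_i(t), one has ‖D(z*(t) − z**(t))‖₁ ≤ exp(−∫₀ᵗ β^*(τ) dτ) · ‖D(z*(0) − z**(0))‖₁ for all t ≥ 0; moreover, if ∫₀^∞ β^*(t) dt = +∞ then ‖z*(t) − z**(t)‖₁ → 0 as t → ∞. -/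

import Mathlib

/-!
Write `D = diag(d) U` with `U` the upper-triangular matrix of ones, and `B = Δ U`, where `Δ` holds
the differences of consecutive columns of `A` (rows `1, …, S`). Then
`D B D⁻¹ = diag(d) (U Δ) diag(d)⁻¹`, and `(U Δ)_{ij}` is the sum over rows `k > i` of
`A_{k,j+1} - A_{k,j}`. As the columns of `A` sum to zero, the monotonicity of `λ` and `μ` makes
every off-diagonal entry of `C = D B D⁻¹` nonnegative.

The difference `u = D (z* - z**)` solves `u' = C u`. For a Metzler matrix `C` with column sums
`-α_k ≤ -β*`, an Euler step `u + h C u = (1 + h C) u` uses a nonnegative matrix with column sums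
at most `1 - h β*`, so the right derivative of `‖u‖₁` is at most `-β* ‖u‖₁`. A comparison argument
gives the bound, and since `D` is invertible, `‖u‖₁ → 0` forces `‖z* - z**‖₁ → 0`.
-/

open Set Filter

/-- The reduced matrix `B(t)` of the SZK model on `{0,…,S}` with arrival rates
`λ_k` and service rates `μ_k`: `B_{ij} = A_{ij} − A_{i0}` where `A(t)` is the
transposed intensity matrix and `A_{i0} = λ_i`; 1-based indices `1,…,S` are
encoded by `i : Fin S ↦ i+1`. -/
def szkB (S : ℕ) (lam mu : ℕ → ℝ → ℝ) (t : ℝ) : Matrix (Fin S) (Fin S) ℝ :=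
  fun i j =>
    (if (j : ℕ) < (i : ℕ) then lam ((i : ℕ) - (j : ℕ)) t
     else if (i : ℕ) < (j : ℕ) then mu ((j : ℕ) - (i : ℕ)) t
     else -((∑ k ∈ Finset.Icc 1 ((i : ℕ) + 1), mu k t) +
            ∑ k ∈ Finset.Icc 1 (S - ((i : ℕ) + 1)), lam k t))
    - lam ((i : ℕ) + 1) t

/-- The upper-triangular matrix `D` with `D_{kj} = d_k` for `j ≥ k`. -/
def triD (S : ℕ) (d : ℕ → ℝ) : Matrix (Fin S) (Fin S) ℝ :=
  fun i j => if i ≤ j then d ((i : ℕ) + 1) else 0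

open Topology Matrix

theorem continuousOn_ciInf_of_finite {ι : Type*} [Finite ι] {f : ι → ℝ → ℝ} {s : Set ℝ}
    (hf : ∀ i, ContinuousOn (f i) s) : ContinuousOn (fun t => ⨅ i, f i t) s := by
  cases nonempty_fintype ι
  rcases isEmpty_or_nonempty ι with hι | hι
  · simpa [Real.iInf_of_isEmpty] using continuousOn_const
  · simpa only [← Finset.inf'_univ_eq_ciInf] using
      ContinuousOn.finset_inf'_apply Finset.univ_nonempty fun i _ => hf i

section MetzlerContraction

variable {ι : Type*} [Fintype ι]

theorem sum_abs_mulVec_le (P : Matrix ι ι ℝ) (v : ι → ℝ) {c : ℝ}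
    (hc : ∀ j, ∑ i, |P i j| ≤ c) : ∑ i, |(P *ᵥ v) i| ≤ c * ∑ i, |v i| :=
  calc ∑ i, |(P *ᵥ v) i|
      ≤ ∑ i, ∑ j, |P i j| * |v j| := by
        gcongr with i
        simpa only [mulVec, dotProduct, abs_mul] using
          Finset.abs_sum_le_sum_abs (fun j => P i j * v j) Finset.univ
    _ = ∑ j, (∑ i, |P i j|) * |v j| := by
        rw [Finset.sum_comm]
        simp only [Finset.sum_mul]
    _ ≤ ∑ j, c * |v j| :=
        Finset.sum_le_sum fun j _ => mul_le_mul_of_nonneg_right (hc j) (abs_nonneg _)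
    _ = c * ∑ i, |v i| := (Finset.mul_sum _ _ _).symm

variable [DecidableEq ι]

theorem tendsto_sum_abs_zero_of_mulVec {α : Type*} {l : Filter α} {v : α → ι → ℝ}
    {P E : Matrix ι ι ℝ} (hEP : E * P = 1)
    (h : Tendsto (fun a => ∑ i, |(P *ᵥ v a) i|) l (𝓝 0)) :
    Tendsto (fun a => ∑ i, |v a i|) l (𝓝 0) := by
  refine squeeze_zero (fun a => Finset.sum_nonneg fun i _ => abs_nonneg _) (fun a => ?_)
    (by simpa using h.const_mul (∑ i, ∑ j, |E i j|))
  have hle := sum_abs_mulVec_le E (P *ᵥ v a) (c := ∑ i, ∑ j, |E i j|) fun j =>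
    Finset.sum_le_sum fun i _ => Finset.single_le_sum (fun k _ => abs_nonneg (E i k))
      (Finset.mem_univ j)
  rwa [mulVec_mulVec, hEP, one_mulVec] at hle

theorem hasDerivWithinAt_mulVec_conj {w : ℝ → ι → ℝ} {B P : Matrix ι ι ℝ} {s : Set ℝ} {t : ℝ}
    (hP : P⁻¹ * P = 1) (hw : ∀ i, HasDerivWithinAt (fun s => w s i) ((B *ᵥ w t) i) s t)
    (i : ι) :
    HasDerivWithinAt (fun s => (P *ᵥ w s) i) (((P * B * P⁻¹) *ᵥ (P *ᵥ w t)) i) s t := by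
  rw [mulVec_mulVec, Matrix.mul_assoc, hP, Matrix.mul_one, ← mulVec_mulVec]
  exact HasDerivWithinAt.fun_sum fun j _ => (hw j).const_mul (P i j)

theorem sum_abs_add_mul_mulVec_le {C : Matrix ι ι ℝ} {β h : ℝ} (hh : 0 ≤ h)
    (hoff : ∀ i j, i ≠ j → 0 ≤ C i j) (hcol : ∀ j, ∑ i, C i j ≤ -β)
    (hdiag : ∀ j, 0 ≤ 1 + h * C j j) (v : ι → ℝ) :
    ∑ i, |v i + h * (C *ᵥ v) i| ≤ (1 - h * β) * ∑ i, |v i| := by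
  have hP : ∀ i j, 0 ≤ (1 + h • C) i j := by
    intro i j
    rcases eq_or_ne i j with rfl | hij
    · simpa using hdiag i
    · simpa [hij] using mul_nonneg hh (hoff i j hij)
  have hstep : ∀ i, v i + h * (C *ᵥ v) i = ((1 + h • C) *ᵥ v) i := by
    simp [add_mulVec, smul_mulVec]
  simp only [hstep]
  refine sum_abs_mulVec_le _ v fun j => ?_
  calc ∑ i, |(1 + h • C) i j| = ∑ i, (1 + h • C) i j :=
        Finset.sum_congr rfl fun i _ => abs_of_nonneg (hP i j)
    _ = 1 + h * ∑ i, C i j := by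
        simp [one_apply, Finset.mul_sum, Finset.sum_add_distrib]
    _ ≤ 1 - h * β := by nlinarith [hcol j]

theorem frequently_slope_sum_abs_lt {u : ℝ → ι → ℝ} {C : Matrix ι ι ℝ} {β x r : ℝ}
    (hu : ∀ i, HasDerivWithinAt (fun s => u s i) ((C *ᵥ u x) i) (Ici x) x)
    (hoff : ∀ i j, i ≠ j → 0 ≤ C i j) (hcol : ∀ j, ∑ i, C i j ≤ -β)
    (hr : -β * ∑ i, |u x i| < r) :
    ∃ᶠ z in 𝓝[>] x, slope (fun s => ∑ i, |u s i|) x z < r := by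
  set err : ℝ → ι → ℝ := fun z i => slope (fun s => u s i) x z - (C *ᵥ u x) i
  have herr : Tendsto (fun z => ∑ i, |err z i|) (𝓝[>] x) (𝓝 0) := by
    have h : ∀ i, Tendsto (fun z => |err z i|) (𝓝[>] x) (𝓝 0) := fun i => by
      have := (hasDerivWithinAt_iff_tendsto_slope' self_notMem_Ioi).1
        (hasDerivWithinAt_Ioi_iff_Ici.2 (hu i))
      simpa [err] using (this.sub_const ((C *ᵥ u x) i)).abs
    simpa using tendsto_finsetSum Finset.univ fun i _ => h i
  have hsmall : ∀ j, ∀ᶠ z in 𝓝[>] x, 0 ≤ 1 + (z - x) * C j j := fun j => by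
    have : Tendsto (fun z => 1 + (z - x) * C j j) (𝓝[>] x) (𝓝 1) := by
      have h := (show Continuous fun z => 1 + (z - x) * C j j by fun_prop).tendsto x
      simpa using h.mono_left nhdsWithin_le_nhds
    exact this.eventually (eventually_ge_nhds zero_lt_one)
  refine Eventually.frequently ?_
  filter_upwards [herr.eventually (gt_mem_nhds (sub_pos.2 hr)), (eventually_all.2 hsmall),
    self_mem_nhdsWithin] with z hz hdiag hxz
  have hh : 0 < z - x := sub_pos.2 hxz
  have hsplit : ∀ i, u z i = (u x i + (z - x) * (C *ᵥ u x) i) + (z - x) * err z i := by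
    intro i
    simp only [err, slope_def_field]
    field_simp
    ring
  have hVz : ∑ i, |u z i| ≤ (1 - (z - x) * β) * ∑ i, |u x i| + (z - x) * ∑ i, |err z i| :=
    calc ∑ i, |u z i|
        ≤ ∑ i, (|u x i + (z - x) * (C *ᵥ u x) i| + (z - x) * |err z i|) := by
          gcongr with i
          rw [hsplit i]
          refine (abs_add_le _ _).trans_eq ?_
          rw [abs_mul, abs_of_pos hh]
      _ ≤ _ := by
          rw [Finset.sum_add_distrib, ← Finset.mul_sum]
          gcongr
          exact sum_abs_add_mul_mulVec_le hh.le hoff hcol hdiag _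
  rw [slope_def_field, div_lt_iff₀ hh]
  nlinarith

theorem sum_abs_le_exp_neg_integral_mul {u : ℝ → ι → ℝ} {C : ℝ → Matrix ι ι ℝ} {β : ℝ → ℝ}
    (hβ : ContinuousOn β (Ici 0))
    (hu : ∀ t ∈ Ici (0 : ℝ), ∀ i, HasDerivWithinAt (fun s => u s i) ((C t *ᵥ u t) i) (Ici 0) t)
    (hoff : ∀ t ∈ Ici (0 : ℝ), ∀ i j, i ≠ j → 0 ≤ C t i j)
    (hcol : ∀ t ∈ Ici (0 : ℝ), ∀ j, ∑ i, C t i j ≤ -β t) {t : ℝ} (ht : 0 ≤ t) :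
    ∑ i, |u t i| ≤ Real.exp (-∫ τ in (0 : ℝ)..t, β τ) * ∑ i, |u 0 i| := by
  set I : ℝ → ℝ := fun s => ∫ τ in (0 : ℝ)..s, β τ
  set V : ℝ → ℝ := fun s => ∑ i, |u s i|
  have hI : ∀ x ∈ Ici (0 : ℝ), HasDerivWithinAt I (β x) (Ici x) x := fun x hx =>
    intervalIntegral.integral_hasDerivWithinAt_right
      ((hβ.mono (by rw [uIcc_of_le hx]; exact Icc_subset_Ici_self)).intervalIntegrable)
      ((hβ.mono (Ioi_subset_Ici hx)).stronglyMeasurableAtFilter_nhdsWithin measurableSet_Ioi x)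
      ((hβ x hx).mono (Ioi_subset_Ici hx))
  have hIcont : ContinuousOn I (Icc 0 t) := by
    have h := intervalIntegral.continuousOn_primitive_interval (a := 0) (b := t)
      (((hβ.mono Icc_subset_Ici_self).integrableOn_Icc (μ := MeasureTheory.volume)).mono_set
        (uIcc_of_le ht).subset)
    rwa [uIcc_of_le ht] at h
  have hV : ContinuousOn V (Icc 0 t) :=
    continuousOn_finsetSum _ fun i _ => ContinuousOn.abs fun x hx =>
      ((hu x hx.1 i).continuousWithinAt).mono Icc_subset_Ici_self
  -- Compare with `exp (-I s) * (V 0 + ε s)`, whose growth rate beats `-β` strictly; let `ε → 0`.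
  have hε : ∀ ε > 0, V t ≤ Real.exp (-I t) * (V 0 + ε * t) := fun ε hε =>
    image_le_of_liminf_slope_right_lt_deriv_boundary' (f' := fun x => -β x * V x) hV
      (fun x hx r hr => frequently_slope_sum_abs_lt
        (fun i => (hu x hx.1 i).mono (Ici_subset_Ici.2 hx.1)) (hoff x hx.1) (hcol x hx.1) hr)
      (B := fun s => Real.exp (-I s) * (V 0 + ε * s))
      (B' := fun x => -β x * (Real.exp (-I x) * (V 0 + ε * x)) + ε * Real.exp (-I x))
      (by simp [I]) ((Real.continuous_exp.comp_continuousOn hIcont.neg).mul (by fun_prop))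
      (fun x hx => (((hI x hx.1).neg.exp).mul
        (((hasDerivWithinAt_id x _).const_mul ε).const_add _)).congr_deriv (by simp; ring))
      (fun x _ hVB => by rw [hVB]; linarith [mul_pos hε (Real.exp_pos (-I x))])
      (right_mem_Icc.2 ht)
  have hlim : Tendsto (fun ε => Real.exp (-I t) * (V 0 + ε * t)) (𝓝[>] 0)
      (𝓝 (Real.exp (-I t) * V 0)) := by
    have h := (show Continuous fun ε => Real.exp (-I t) * (V 0 + ε * t) by fun_prop).tendsto 0
    simpa using h.mono_left nhdsWithin_le_nhds
  exact ge_of_tendsto hlim (eventually_nhdsWithin_of_forall hε)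

end MetzlerContraction

section SZKModel

variable (S : ℕ) (lam mu : ℕ → ℝ → ℝ) (t : ℝ)

/-- The transposed intensity matrix `A(t)` of the SZK model, indexed by the states `0, …, S`. -/
def szkA : Matrix (Fin (S + 1)) (Fin (S + 1)) ℝ :=
  fun i j =>
    if (j : ℕ) < i then lam (i - j) t
    else if (i : ℕ) < j then mu (j - i) t
    else -((∑ k ∈ Finset.Icc 1 (i : ℕ), mu k t) + ∑ k ∈ Finset.Icc 1 (S - i), lam k t)

def szkDiff : Matrix (Fin S) (Fin S) ℝ :=
  fun k m => szkA S lam mu t k.succ m.succ - szkA S lam mu t k.succ m.castSucc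

theorem szkB_apply (i j : Fin S) :
    szkB S lam mu t i j = szkA S lam mu t i.succ j.succ - szkA S lam mu t i.succ 0 := by
  simp [szkB, szkA]

theorem sum_szkA_col (j : Fin (S + 1)) : ∑ i, szkA S lam mu t i j = 0 := by
  obtain ⟨n, hn⟩ := j
  set F : ℕ → ℝ := fun i => if n < i then lam (i - n) t else if i < n then mu (n - i) t
    else -((∑ k ∈ Finset.Icc 1 i, mu k t) + ∑ k ∈ Finset.Icc 1 (S - i), lam k t)
  have hmu : ∑ i ∈ Finset.range n, F i = ∑ k ∈ Finset.Icc 1 n, mu k t := by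
    refine Finset.sum_nbij' (fun i => n - i) (fun k => n - k) ?_ ?_ ?_ ?_ ?_ <;>
      intro a ha <;> simp only [Finset.mem_range, Finset.mem_Icc] at ha ⊢
    all_goals first | omega | simp only [F, if_neg (show ¬n < a by omega), if_pos ha]
  have hlam : ∑ i ∈ Finset.Ico (n + 1) (S + 1), F i = ∑ k ∈ Finset.Icc 1 (S - n), lam k t := by
    refine Finset.sum_nbij' (fun i => i - n) (fun k => k + n) ?_ ?_ ?_ ?_ ?_ <;>
      intro a ha <;> simp only [Finset.mem_Ico, Finset.mem_Icc] at ha ⊢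
    all_goals first | omega | simp only [F, if_pos (show n < a by omega)]
  rw [show ∑ i, szkA S lam mu t i ⟨n, hn⟩ = ∑ i ∈ Finset.range (S + 1), F i from
      Fin.sum_univ_eq_sum_range F _,
    ← Finset.sum_range_add_sum_Ico _ (show n + 1 ≤ S + 1 by omega), Finset.sum_range_succ,
    hmu, hlam]
  simp [F]

-- `triD S 1` is the upper-triangular matrix of ones.
theorem szkB_eq_szkDiff_mul : szkB S lam mu t = szkDiff S lam mu t * triD S 1 := by
  ext k j
  rw [szkB_apply, ← Fin.sum_Iic_sub j (fun m => szkA S lam mu t k.succ m), mul_apply,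
    ← Finset.filter_ge_eq_Iic, Finset.sum_filter]
  simp [triD, szkDiff]

theorem triD_eq_diagonal_mul (d : ℕ → ℝ) :
    triD S d = diagonal (fun i : Fin S => d (i + 1)) * triD S 1 := by
  ext i j
  simp [triD, diagonal_mul]

theorem det_triD_one : (triD S 1).det = 1 := by
  rw [det_of_isUpperTriangular fun i j hij => by simpa [triD] using hij]
  simp [triD]

theorem isUnit_det_triD {d : ℕ → ℝ} (hd : ∀ i : Fin S, d (i + 1) ≠ 0) : IsUnit (triD S d).det := by
  rw [triD_eq_diagonal_mul, det_mul, det_triD_one, det_diagonal, mul_one]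
  exact (Finset.prod_ne_zero_iff.2 fun i _ => hd i).isUnit

theorem triD_mul_szkB_mul_inv_apply {d : ℕ → ℝ} (hd : ∀ i : Fin S, d (i + 1) ≠ 0)
    (i j : Fin S) :
    (triD S d * szkB S lam mu t * (triD S d)⁻¹) i j
      = d (i + 1) * (triD S 1 * szkDiff S lam mu t) i j / d (j + 1) := by
  have hU : IsUnit (triD S 1).det := by rw [det_triD_one]; exact isUnit_one
  have hΔ : (diagonal fun i : Fin S => d (i + 1))⁻¹ = diagonal fun i : Fin S => (d (i + 1))⁻¹ :=
    inv_eq_right_inv (by simp [diagonal_mul_diagonal, hd])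
  rw [triD_eq_diagonal_mul, szkB_eq_szkDiff_mul, Matrix.mul_inv_rev, hΔ,
    show ∀ Δ Δ' : Matrix (Fin S) (Fin S) ℝ, Δ * triD S 1 * (szkDiff S lam mu t * triD S 1) *
        ((triD S 1)⁻¹ * Δ') = Δ * (triD S 1 * szkDiff S lam mu t) * Δ' from fun Δ Δ' => by
      simp only [Matrix.mul_assoc, mul_nonsing_inv_cancel_left _ _ hU],
    mul_diagonal, diagonal_mul, div_eq_mul_inv]

theorem triD_one_mul_szkDiff_nonneg
    (hlam : ∀ k, 1 ≤ k → k ≤ S - 1 → lam (k + 1) t ≤ lam k t)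
    (hmu : ∀ k, 1 ≤ k → k ≤ S - 1 → mu (k + 1) t ≤ mu k t) {i j : Fin S} (hij : i ≠ j) :
    0 ≤ (triD S 1 * szkDiff S lam mu t) i j := by
  set h : Fin (S + 1) → ℝ := fun m => szkA S lam mu t m j.succ - szkA S lam mu t m j.castSucc
  have hG : (triD S 1 * szkDiff S lam mu t) i j = ∑ k ∈ Finset.Ici i, h k.succ := by
    rw [mul_apply, ← Finset.filter_le_eq_Ici, Finset.sum_filter]
    simp [triD, szkDiff, h]
  rcases lt_or_gt_of_ne hij with hlt | hgt
  · -- Columns of `A` sum to zero, so the tail sum over rows `> i` equals minus the head sum,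
    -- whose terms `μ_{j+1-m} - μ_{j-m}` are nonpositive.
    have hsplit := Finset.sum_filter_add_sum_filter_not Finset.univ (· < i.succ) h
    rw [show ∑ m, h m = 0 by simp [h, Finset.sum_sub_distrib, sum_szkA_col],
      Finset.filter_gt_eq_Iio, show Finset.univ.filter (fun m => ¬ m < i.succ) = Finset.Ici i.succ
        by ext; simp, Fin.sum_Ici_succ, ← hG] at hsplit
    have hhead : ∑ m ∈ Finset.Iio i.succ, h m ≤ 0 := by
      refine Finset.sum_nonpos fun m hm => ?_
      rw [Finset.mem_Iio, Fin.lt_def, Fin.val_succ] at hm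
      rw [Fin.lt_def] at hlt
      simp only [h, szkA, Fin.val_succ, Fin.val_castSucc]
      rw [if_neg (by omega), if_pos (by omega), if_neg (by omega), if_pos (by omega),
        show (j : ℕ) + 1 - m = j - m + 1 by omega]
      linarith [hmu (j - m) (by omega) (by omega)]
    linarith
  · rw [hG]
    refine Finset.sum_nonneg fun k hk => ?_
    rw [Finset.mem_Ici, Fin.le_def] at hk
    rw [Fin.lt_def] at hgt
    simp only [h, szkA, Fin.val_succ, Fin.val_castSucc]
    rw [if_pos (by omega), if_pos (by omega), show (k : ℕ) + 1 - j = k + 1 - (j + 1) + 1 by omega]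
    linarith [hlam (k + 1 - (j + 1)) (by omega) (by omega)]

theorem triD_mul_szkB_mul_inv_nonneg {d : ℕ → ℝ} (hd : ∀ i : Fin S, 0 < d (i + 1))
    (hlam : ∀ k, 1 ≤ k → k ≤ S - 1 → lam (k + 1) t ≤ lam k t)
    (hmu : ∀ k, 1 ≤ k → k ≤ S - 1 → mu (k + 1) t ≤ mu k t) {i j : Fin S} (hij : i ≠ j) :
    0 ≤ (triD S d * szkB S lam mu t * (triD S d)⁻¹) i j := by
  rw [triD_mul_szkB_mul_inv_apply S lam mu t fun i => (hd i).ne']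
  exact div_nonneg
    (mul_nonneg (hd i).le (triD_one_mul_szkDiff_nonneg S lam mu t hlam hmu hij)) (hd j).le

theorem continuousOn_szkA {s : Set ℝ} (hlam : ∀ k, 1 ≤ k → k ≤ S → ContinuousOn (lam k) s)
    (hmu : ∀ k, 1 ≤ k → k ≤ S → ContinuousOn (mu k) s) (i j : Fin (S + 1)) :
    ContinuousOn (fun t => szkA S lam mu t i j) s := by
  have hi := i.is_lt
  have hj := j.is_lt
  simp only [szkA]
  split_ifs
  · exact hlam _ (by omega) (by omega)
  · exact hmu _ (by omega) (by omega)
  · refine ((continuousOn_finsetSum _ fun k hk => ?_).add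
      (continuousOn_finsetSum _ fun k hk => ?_)).neg <;> rw [Finset.mem_Icc] at hk
    · exact hmu k hk.1 (by omega)
    · exact hlam k hk.1 (by omega)

theorem continuousOn_triD_mul_szkB_mul_inv_apply {d : ℕ → ℝ} {s : Set ℝ}
    (hd : ∀ i : Fin S, d (i + 1) ≠ 0) (hlam : ∀ k, 1 ≤ k → k ≤ S → ContinuousOn (lam k) s)
    (hmu : ∀ k, 1 ≤ k → k ≤ S → ContinuousOn (mu k) s) (i j : Fin S) :
    ContinuousOn (fun t => (triD S d * szkB S lam mu t * (triD S d)⁻¹) i j) s := by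
  simp only [triD_mul_szkB_mul_inv_apply S lam mu _ hd, mul_apply, szkDiff]
  exact (continuousOn_const.mul (continuousOn_finsetSum _ fun k _ => continuousOn_const.mul
    ((continuousOn_szkA S lam mu hlam hmu _ _).sub
      (continuousOn_szkA S lam mu hlam hmu _ _)))).div_const _

end SZKModel

theorem szk_upper_bound_and_ergodicity_general
    (S : ℕ)
    (lam mu : ℕ → ℝ → ℝ) (d : ℕ → ℝ)
    (hlam : ∀ k, 1 ≤ k → k ≤ S →
      ContinuousOn (lam k) (Ici 0) ∧ ∀ t ∈ Ici (0 : ℝ), 0 ≤ lam k t)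
    (hmu : ∀ k, 1 ≤ k → k ≤ S →
      ContinuousOn (mu k) (Ici 0) ∧ ∀ t ∈ Ici (0 : ℝ), 0 ≤ mu k t)
    (hmono : ∀ k, 1 ≤ k → k ≤ S - 1 → ∀ t ∈ Ici (0 : ℝ),
      lam (k + 1) t ≤ lam k t ∧ mu (k + 1) t ≤ mu k t)
    (hd : ∀ k, 1 ≤ k → k ≤ S → 0 < d k)
    (alpha : Fin S → ℝ → ℝ)
    (halpha : ∀ k t, alpha k t = -∑ i, (triD S d * szkB S lam mu t * (triD S d)⁻¹) i k)
    (bstar : ℝ → ℝ) (hbstar : ∀ t, bstar t = ⨅ k, alpha k t)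
    (f : ℝ → Fin S → ℝ)
    (z₁ z₂ : ℝ → Fin S → ℝ)
    (hz₁ : ∀ t ∈ Ici (0 : ℝ), ∀ i, HasDerivWithinAt (fun s => z₁ s i)
      ((szkB S lam mu t).mulVec (z₁ t) i + f t i) (Ici 0) t)
    (hz₂ : ∀ t ∈ Ici (0 : ℝ), ∀ i, HasDerivWithinAt (fun s => z₂ s i)
      ((szkB S lam mu t).mulVec (z₂ t) i + f t i) (Ici 0) t) :
    (∀ t ∈ Ici (0 : ℝ),
      ∑ i, |(triD S d).mulVec (z₁ t - z₂ t) i| ≤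
        Real.exp (-∫ τ in (0 : ℝ)..t, bstar τ) *
          ∑ i, |(triD S d).mulVec (z₁ 0 - z₂ 0) i|) ∧
    (Tendsto (fun T => ∫ τ in (0 : ℝ)..T, bstar τ) atTop atTop →
      Tendsto (fun t => ∑ i, |z₁ t i - z₂ t i|) atTop (nhds 0)) := by
  have hd' : ∀ i : Fin S, 0 < d (i + 1) := fun i => hd _ (by omega) (by omega)
  set C : ℝ → Matrix (Fin S) (Fin S) ℝ := fun t => triD S d * szkB S lam mu t * (triD S d)⁻¹
  have hβ : ContinuousOn bstar (Ici 0) := by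
    rw [show bstar = fun t => ⨅ k, alpha k t from funext hbstar]
    refine continuousOn_ciInf_of_finite fun k => ?_
    rw [show alpha k = fun t => -∑ i, C t i k from funext (halpha k)]
    exact (continuousOn_finsetSum _ fun i _ => continuousOn_triD_mul_szkB_mul_inv_apply S lam mu
      (fun i => (hd' i).ne') (fun k h1 h2 => (hlam k h1 h2).1) (fun k h1 h2 => (hmu k h1 h2).1)
      i k).neg
  have hcol : ∀ t ∈ Ici (0 : ℝ), ∀ j, ∑ i, C t i j ≤ -bstar t := fun t _ j => by
    rw [hbstar, le_neg, ← halpha]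
    exact ciInf_le (Finite.bddBelow_range _) j
  have hDinv : (triD S d)⁻¹ * triD S d = 1 :=
    nonsing_inv_mul _ (isUnit_det_triD S fun i => (hd' i).ne')
  have hu : ∀ t ∈ Ici (0 : ℝ), ∀ i, HasDerivWithinAt (fun s => (triD S d *ᵥ (z₁ s - z₂ s)) i)
      ((C t *ᵥ (triD S d *ᵥ (z₁ t - z₂ t))) i) (Ici 0) t := fun t ht =>
    hasDerivWithinAt_mulVec_conj hDinv fun i =>
      ((hz₁ t ht i).sub (hz₂ t ht i)).congr_deriv (by simp [mulVec_sub])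
  have hbound := fun t (ht : t ∈ Ici (0 : ℝ)) =>
    sum_abs_le_exp_neg_integral_mul hβ hu (fun t ht _ _ => triD_mul_szkB_mul_inv_nonneg S lam mu t
      hd' (fun k h1 h2 => (hmono k h1 h2 t ht).1) (fun k h1 h2 => (hmono k h1 h2 t ht).2)) hcol ht
  refine ⟨hbound, fun hI => tendsto_sum_abs_zero_of_mulVec hDinv ?_⟩
  have hexp : Tendsto (fun t => Real.exp (-∫ τ in (0 : ℝ)..t, bstar τ)) atTop (𝓝 0) :=
    Real.tendsto_exp_atBot.comp (tendsto_neg_atTop_atBot.comp hI)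
  refine squeeze_zero' (Eventually.of_forall fun t => Finset.sum_nonneg fun i _ => abs_nonneg _)
    ?_ (by simpa using hexp.mul_const (∑ i, |(triD S d *ᵥ (z₁ 0 - z₂ 0)) i|))
  filter_upwards [eventually_ge_atTop 0] with t ht using hbound t ht

/-- Theorem 3 (upper bound and weak ergodicity) for the SZK model with
nonincreasing arrival and service rates. -/
theorem szk_upper_bound_and_ergodicity
    (S : ℕ) (hS : 1 ≤ S)
    (lam mu : ℕ → ℝ → ℝ) (d : ℕ → ℝ)
    (hlam : ∀ k, 1 ≤ k → k ≤ S →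
      ContinuousOn (lam k) (Ici 0) ∧ ∀ t ∈ Ici (0 : ℝ), 0 ≤ lam k t)
    (hmu : ∀ k, 1 ≤ k → k ≤ S →
      ContinuousOn (mu k) (Ici 0) ∧ ∀ t ∈ Ici (0 : ℝ), 0 ≤ mu k t)
    (hmono : ∀ k, 1 ≤ k → k ≤ S - 1 → ∀ t ∈ Ici (0 : ℝ),
      lam (k + 1) t ≤ lam k t ∧ mu (k + 1) t ≤ mu k t)
    (hd : ∀ k, 1 ≤ k → k ≤ S → 0 < d k)
    (alpha : Fin S → ℝ → ℝ)
    (halpha : ∀ k t, alpha k t = -∑ i, (triD S d * szkB S lam mu t * (triD S d)⁻¹) i k)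
    (bstar : ℝ → ℝ) (hbstar : ∀ t, bstar t = ⨅ k, alpha k t)
    (f : ℝ → Fin S → ℝ) (hf : ∀ t, ∀ i : Fin S, f t i = lam ((i : ℕ) + 1) t)
    (z₁ z₂ : ℝ → Fin S → ℝ)
    (hz₁ : ∀ t ∈ Ici (0 : ℝ), ∀ i, HasDerivWithinAt (fun s => z₁ s i)
      ((szkB S lam mu t).mulVec (z₁ t) i + f t i) (Ici 0) t)
    (hz₂ : ∀ t ∈ Ici (0 : ℝ), ∀ i, HasDerivWithinAt (fun s => z₂ s i)
      ((szkB S lam mu t).mulVec (z₂ t) i + f t i) (Ici 0) t) :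
    (∀ t ∈ Ici (0 : ℝ),
      ∑ i, |(triD S d).mulVec (z₁ t - z₂ t) i| ≤
        Real.exp (-∫ τ in (0 : ℝ)..t, bstar τ) *
          ∑ i, |(triD S d).mulVec (z₁ 0 - z₂ 0) i|) ∧
    (Tendsto (fun T => ∫ τ in (0 : ℝ)..T, bstar τ) atTop atTop →
      Tendsto (fun t => ∑ i, |z₁ t i - z₂ t i|) atTop (nhds 0)) :=
  szk_upper_bound_and_ergodicity_general S lam mu d hlam hmu hmono hd alpha halpha bstar hbstar f z₁
    z₂ hz₁ hz₂
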